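/- Let X and Y be independent random variables uniform on [-1,1] and s ∈ (0,1]. Then P(|min(X,s)| < |Y|) − P(|max(X,s)| < |Y|) = s²/2. -/

import Mathlib

/-!
Conditioning on `X`: since `|Y|` is uniform on `[0, 1]`, `P(f X < |Y|) = E[1 - f X]` for any `f`
with values in `[0, 1]`. The difference of probabilities is therefore
`½ ∫_{-1}^{1} (|max x s| - |min x s|) dx`, whose integrand is `s + x`, `s - x`, `x - s` on
`[-1, 0]`, `[0, s]`, `[s, 1]`; the three pieces sum to `s²`.
-/

open MeasureTheory

noncomputable def unif : Measure ℝ :=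
  (2 : ENNReal)⁻¹ • (volume.restrict (Set.Icc (-1 : ℝ) 1))

open Set

instance : IsProbabilityMeasure unif := by
  constructor
  rw [unif, Measure.smul_apply, Measure.restrict_apply_univ, Real.volume_Icc]
  norm_num [ENNReal.inv_mul_cancel]

lemma ae_unif_mem_Icc : ∀ᵐ x ∂unif, x ∈ Icc (-1 : ℝ) 1 :=
  Measure.ae_smul_measure (ae_restrict_mem measurableSet_Icc) _

lemma unif_real_apply {A : Set ℝ} (hA : MeasurableSet A) :
    unif.real A = volume.real (A ∩ Icc (-1) 1) / 2 := by
  rw [unif, measureReal_ennreal_smul_apply, measureReal_restrict_apply hA]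
  norm_num [div_eq_inv_mul]

lemma unif_real_setOf_lt_abs {t : ℝ} (ht0 : 0 ≤ t) (ht1 : t ≤ 1) :
    unif.real {y | t < |y|} = 1 - t := by
  have hcompl : {y : ℝ | t < |y|} = {y | |y| ≤ t}ᶜ := by ext; simp
  have hIcc : {y : ℝ | |y| ≤ t} ∩ Icc (-1) 1 = Icc (-t) t := by
    have hsub : {y : ℝ | |y| ≤ t} ⊆ Icc (-1) 1 := fun y hy ↦ abs_le.1 (hy.trans ht1)
    rw [inter_eq_left.2 hsub]
    ext y
    exact abs_le (a := y)
  have hmeas : MeasurableSet {y : ℝ | |y| ≤ t} := measurableSet_le measurable_abs measurable_const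
  rw [hcompl, probReal_compl_eq_one_sub hmeas, unif_real_apply hmeas, hIcc,
    Real.volume_real_Icc_of_le (by linarith)]
  ring

lemma prod_unif_real_setOf_lt_abs {α : Type*} [MeasurableSpace α] {μ : Measure α} [SFinite μ]
    {f : α → ℝ} (hf : Measurable f) (hf_mem : ∀ᵐ x ∂μ, f x ∈ Icc 0 1) :
    (μ.prod unif).real {p : α × ℝ | f p.1 < |p.2|} = ∫ x, (1 - f x) ∂μ := by
  have hS : MeasurableSet {p : α × ℝ | f p.1 < |p.2|} :=
    measurableSet_lt (hf.comp measurable_fst) (measurable_abs.comp measurable_snd)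
  have hslice : ∀ᵐ x ∂μ, unif {y | f x < |y|} = ENNReal.ofReal (1 - f x) := by
    filter_upwards [hf_mem] with x hx
    rw [← ofReal_measureReal, unif_real_setOf_lt_abs hx.1 hx.2]
  have hnonneg : 0 ≤ᵐ[μ] fun x ↦ 1 - f x := by
    filter_upwards [hf_mem] with x hx
    simpa using hx.2
  rw [measureReal_def, Measure.prod_apply hS,
    integral_eq_lintegral_of_nonneg_ae hnonneg (measurable_const.sub hf).aestronglyMeasurable]
  exact congrArg ENNReal.toReal (lintegral_congr_ae hslice)

lemma integral_unif (g : ℝ → ℝ) : ∫ x, g x ∂unif = (∫ x in (-1)..1, g x) / 2 := by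
  rw [unif, integral_smul_measure, intervalIntegral.integral_of_le (by norm_num),
    integral_Icc_eq_integral_Ioc]
  norm_num [div_eq_inv_mul]

lemma integral_abs_max_sub_abs_min {s : ℝ} (hs0 : 0 ≤ s) (hs1 : s ≤ 1) :
    ∫ x in (-1)..1, (|max x s| - |min x s|) = s ^ 2 := by
  have hc : Continuous fun x : ℝ ↦ |max x s| - |min x s| := by fun_prop
  rw [← intervalIntegral.integral_add_adjacent_intervals (b := 0) (hc.intervalIntegrable _ _)
      (hc.intervalIntegrable _ _),
    ← intervalIntegral.integral_add_adjacent_intervals (a := 0) (b := s)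
      (hc.intervalIntegrable _ _) (hc.intervalIntegrable _ _)]
  have hleft : ∫ x in (-1)..0, (|max x s| - |min x s|) = ∫ x in (-1)..0, (s + x) := by
    refine intervalIntegral.integral_congr fun x hx ↦ ?_
    rw [uIcc_of_le (by norm_num)] at hx
    rw [max_eq_right (hx.2.trans hs0), min_eq_left (hx.2.trans hs0), abs_of_nonneg hs0,
      abs_of_nonpos hx.2]
    ring
  have hmid : ∫ x in 0..s, (|max x s| - |min x s|) = ∫ x in 0..s, (s - x) := by
    refine intervalIntegral.integral_congr fun x hx ↦ ?_
    rw [uIcc_of_le hs0] at hx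
    rw [max_eq_right hx.2, min_eq_left hx.2, abs_of_nonneg hs0, abs_of_nonneg hx.1]
  have hright : ∫ x in s..1, (|max x s| - |min x s|) = ∫ x in s..1, (x - s) := by
    refine intervalIntegral.integral_congr fun x hx ↦ ?_
    rw [uIcc_of_le hs1] at hx
    rw [max_eq_left hx.1, min_eq_right hx.1, abs_of_nonneg hs0, abs_of_nonneg (hs0.trans hx.1)]
  rw [hleft, hmid, hright, intervalIntegral.integral_comp_add_left (fun x ↦ x),
    intervalIntegral.integral_comp_sub_left (fun x ↦ x),
    intervalIntegral.integral_comp_sub_right (fun x ↦ x), integral_id, integral_id, integral_id]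
  ring

theorem stmt_3 (s : ℝ) (hs0 : 0 < s) (hs1 : s ≤ 1) :
    ((unif.prod unif) {p : ℝ × ℝ | |min p.1 s| < |p.2|}).toReal
      - ((unif.prod unif) {p : ℝ × ℝ | |max p.1 s| < |p.2|}).toReal
      = s ^ 2 / 2 := by
  have hmin : ∀ᵐ x ∂unif, |min x s| ∈ Icc 0 1 := by
    filter_upwards [ae_unif_mem_Icc] with x hx
    exact ⟨abs_nonneg _, abs_le.2 ⟨le_min hx.1 (by linarith), (min_le_right _ _).trans hs1⟩⟩
  have hmax : ∀ᵐ x ∂unif, |max x s| ∈ Icc 0 1 := by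
    filter_upwards [ae_unif_mem_Icc] with x hx
    exact ⟨abs_nonneg _, abs_le.2 ⟨by linarith [le_max_right x s], max_le hx.2 hs1⟩⟩
  rw [← measureReal_def, ← measureReal_def,
    prod_unif_real_setOf_lt_abs (by fun_prop) hmin, prod_unif_real_setOf_lt_abs (by fun_prop) hmax,
    integral_unif, integral_unif, ← sub_div,
    ← intervalIntegral.integral_sub ((by fun_prop : Continuous _).intervalIntegrable _ _)
      ((by fun_prop : Continuous _).intervalIntegrable _ _)]
  simp_rw [sub_sub_sub_cancel_left]
  rw [integral_abs_max_sub_abs_min hs0.le hs1]
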